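/- arXiv:2207.03873 — 7 statements merged into one kernel-verified Lean document; each statement's English description precedes it below -/
import Mathlib

section
/- With the recursive construction m₀ = {0}, m_{n+1} = m_n + ({x_n | 1 ∉ m_n + (x_n)}), m = ⋃_n m_n, the ideal m is proper: 1 ∈ m implies 1 = 0 in A. -/
/-- The recursive construction: `m₀ = {0}`,
`m_{n+1} = m_n + ({x_n | 1 ∉ m_n + (x_n)})`, where the negation `¬φ`
is interpreted as `φ → (1 = 0)` in the ring. -/
def mSeq {A : Type*} [CommRing A] (x : ℕ → A) : ℕ → Ideal A
  | 0 => ⊥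
  | n + 1 => mSeq x n ⊔
      Ideal.span {y | y = x n ∧ ((1 : A) ∈ mSeq x n ⊔ Ideal.span {x n} → (1 : A) = 0)}

/-- The union `m = ⋃ₙ mₙ`, as a set. -/
def mUnion {A : Type*} [CommRing A] (x : ℕ → A) : Set A :=
  ⋃ n, (mSeq x n : Set A)

theorem mSeq_proper {A : Type*} [CommRing A] (x : ℕ → A) :
    ∀ n, (1 : A) ∈ mSeq x n → (1 : A) = 0 := by
  intro n
  induction n with
  | zero => intro h; simpa [mSeq] using h
  | succ n ih =>
    intro h
    rw [mSeq] at h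
    by_cases hP : ((1 : A) ∈ mSeq x n ⊔ Ideal.span {x n} → (1 : A) = 0)
    · apply hP
      refine (sup_le_sup_left ?_ (mSeq x n)) h
      apply Ideal.span_mono
      rintro y ⟨rfl, -⟩
      exact rfl
    · have hempty : {y | y = x n ∧ ((1 : A) ∈ mSeq x n ⊔ Ideal.span {x n} → (1 : A) = 0)}
          = (∅ : Set A) := by
        ext y
        simp only [Set.mem_setOf_eq, Set.mem_empty_iff_false, iff_false, not_and]
        intro _ hy
        exact hP hy
      rw [hempty, Ideal.span_empty, sup_bot_eq] at h
      exact ih h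

/-- The ideal `m` of the recursive construction is proper:
`1 ∈ m` implies `1 = 0` in `A`. -/
theorem mUnion_proper {A : Type*} [CommRing A] (x : ℕ → A) (hx : Function.Surjective x) :
    (1 : A) ∈ mUnion x → (1 : A) = 0 := by
  intro h
  obtain ⟨_, ⟨n, rfl⟩, hn⟩ := h
  exact mSeq_proper x n hn
end

section
/- For the ideal m = ⋃_n m_n of the recursive construction and every n ∈ ℕ, the following are equivalent: (1) x_n ∈ m_{n+1}; (2) x_n ∈ m; (3) 1 ∉ m + (x_n); (4) 1 ∉ m_n + (x_n). -/
/-! Every `mₙ` is proper (in the sense `1 ∈ mₙ → 1 = 0`), and so is their union, which is an ideal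
because the `mₙ` form a chain. Hence if `xₙ ∈ m` then `m + (xₙ) = m` is proper, hence so is the
smaller ideal `mₙ + (xₙ)`, and that is exactly the condition under which `xₙ` is put into `mₙ₊₁`. -/

section

variable {A : Type*} [CommRing A] (x : ℕ → A)

lemma mSeq_mono : Monotone (mSeq x) :=
  monotone_nat_of_le_succ fun _ => le_sup_left

lemma mSeq_succ_le (n : ℕ) : mSeq x (n + 1) ≤ mSeq x n ⊔ Ideal.span {x n} :=
  sup_le_sup_left (Ideal.span_mono fun _ hy => hy.1) _

lemma mSeq_succ_of_not (n : ℕ)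
    (h : ¬((1 : A) ∈ mSeq x n ⊔ Ideal.span {x n} → (1 : A) = 0)) :
    mSeq x (n + 1) = mSeq x n := by
  have hempty : {y | y = x n ∧ ((1 : A) ∈ mSeq x n ⊔ Ideal.span {x n} → (1 : A) = 0)} = ∅ :=
    Set.eq_empty_of_forall_notMem fun _ hy => h hy.2
  rw [mSeq, hempty, Ideal.span_empty, sup_bot_eq]

lemma mem_mSeq_succ_self (n : ℕ) (h : (1 : A) ∈ mSeq x n ⊔ Ideal.span {x n} → (1 : A) = 0) :
    x n ∈ mSeq x (n + 1) :=
  le_sup_right (a := mSeq x n) (Ideal.subset_span ⟨rfl, h⟩)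

lemma eq_zero_of_one_mem_mSeq : ∀ n, (1 : A) ∈ mSeq x n → (1 : A) = 0
  | 0, h => by simpa [mSeq] using h
  | n + 1, h => by
    by_cases hn : (1 : A) ∈ mSeq x n ⊔ Ideal.span {x n} → (1 : A) = 0
    · exact hn (mSeq_succ_le x n h)
    · exact eq_zero_of_one_mem_mSeq n (mSeq_succ_of_not x n hn ▸ h)

lemma coe_iSup_mSeq : ((⨆ n, mSeq x n : Ideal A) : Set A) = mUnion x :=
  Submodule.coe_iSup_of_chain ⟨mSeq x, mSeq_mono x⟩

lemma span_mUnion : Ideal.span (mUnion x) = ⨆ n, mSeq x n := by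
  rw [← coe_iSup_mSeq, Ideal.span_eq]

lemma eq_zero_of_one_mem_span_mUnion (h : (1 : A) ∈ Ideal.span (mUnion x)) : (1 : A) = 0 := by
  rw [span_mUnion, ← SetLike.mem_coe, coe_iSup_mSeq] at h
  obtain ⟨n, hn⟩ := Set.mem_iUnion.1 h
  exact eq_zero_of_one_mem_mSeq x n hn

lemma mSeq_sup_span_le_span_mUnion (n : ℕ) :
    mSeq x n ⊔ Ideal.span {x n} ≤ Ideal.span (mUnion x ∪ {x n}) :=
  sup_le
    (fun _ hy => Ideal.subset_span (Or.inl (Set.mem_iUnion.2 ⟨n, hy⟩)))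
    (Ideal.span_mono Set.subset_union_right)

end

theorem mUnion_mem_tfae_general {A : Type*} [CommRing A] (x : ℕ → A)
    (n : ℕ) :
    (x n ∈ mSeq x (n + 1) ↔ x n ∈ mUnion x) ∧
    (x n ∈ mUnion x ↔ ((1 : A) ∈ Ideal.span (mUnion x ∪ {x n}) → (1 : A) = 0)) ∧
    (((1 : A) ∈ Ideal.span (mUnion x ∪ {x n}) → (1 : A) = 0) ↔
      ((1 : A) ∈ mSeq x n ⊔ Ideal.span {x n} → (1 : A) = 0)) := by
  have h12 : x n ∈ mSeq x (n + 1) → x n ∈ mUnion x := fun h => Set.mem_iUnion.2 ⟨n + 1, h⟩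
  have h23 : x n ∈ mUnion x → (1 : A) ∈ Ideal.span (mUnion x ∪ {x n}) → (1 : A) = 0 := by
    intro hm h1
    rw [Set.union_singleton, Set.insert_eq_of_mem hm] at h1
    exact eq_zero_of_one_mem_span_mUnion x h1
  have h34 : ((1 : A) ∈ Ideal.span (mUnion x ∪ {x n}) → (1 : A) = 0) →
      (1 : A) ∈ mSeq x n ⊔ Ideal.span {x n} → (1 : A) = 0 :=
    fun h3 h1 => h3 (mSeq_sup_span_le_span_mUnion x n h1)
  have h41 := mem_mSeq_succ_self x n
  exact ⟨⟨h12, fun h2 => h41 (h34 (h23 h2))⟩,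
    ⟨h23, fun h3 => h12 (h41 (h34 h3))⟩,
    ⟨h34, fun h4 => h23 (h12 (h41 h4))⟩⟩

/-- For every `n`, the following are equivalent:
(1) `x_n ∈ m_{n+1}`; (2) `x_n ∈ m`; (3) `1 ∉ m + (x_n)`; (4) `1 ∉ m_n + (x_n)`,
where `¬φ` means `φ → 1 = 0`. -/
theorem mUnion_mem_tfae {A : Type*} [CommRing A] (x : ℕ → A) (hx : Function.Surjective x)
    (n : ℕ) :
    (x n ∈ mSeq x (n + 1) ↔ x n ∈ mUnion x) ∧
    (x n ∈ mUnion x ↔ ((1 : A) ∈ Ideal.span (mUnion x ∪ {x n}) → (1 : A) = 0)) ∧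
    (((1 : A) ∈ Ideal.span (mUnion x ∪ {x n}) → (1 : A) = 0) ↔
      ((1 : A) ∈ mSeq x n ⊔ Ideal.span {x n} → (1 : A) = 0)) :=
  mUnion_mem_tfae_general x n
end

section
/- The ideal m of the recursive construction is double-negation stable: for every ring element x, if ¬¬(x ∈ m), then x ∈ m. -/
/-- The ideal `m` of the recursive construction is double-negation stable:
`¬¬(x ∈ m) → x ∈ m`, where `¬φ` means `φ → 1 = 0`. -/
theorem mUnion_dns {A : Type*} [CommRing A] (x : ℕ → A) (hx : Function.Surjective x) :
    ∀ a : A, ((a ∈ mUnion x → (1 : A) = 0) → (1 : A) = 0) → a ∈ mUnion x := by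
  intro a h
  by_cases hm : a ∈ mUnion x
  · exact hm
  · have h10 : (1 : A) = 0 := h fun hmem => absurd hmem hm
    have ha : a = 0 := by
      calc a = a * 1 := (mul_one a).symm
        _ = a * 0 := by rw [h10]
        _ = 0 := mul_zero a
    exact Set.mem_iUnion.mpr ⟨0, by simp [mSeq, ha]⟩
end

section
/- For every n ∈ ℕ and every binary sequence v = [v₀,…,v_{n-1}] satisfying v_i = 1 ↔ 1 ∉ a_{[v₀,…,v_{i-1}]} for all i < n, one has a_v = (G_n) + (x_n), where a_v := (v₀x₀, …, v_{n-1}x_{n-1}, x_n); in particular x_n ∈ G if and only if 1 ∉ a_v. -/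
/-- The generator-based construction: `G₀ = ∅`,
`G_{n+1} = G_n ∪ {x_n | 1 ∉ (G_n ∪ {x_n})}`. -/
def GSeq {A : Type*} [CommRing A] (x : ℕ → A) : ℕ → Set A
  | 0 => ∅
  | n + 1 => GSeq x n ∪
      {y | y = x n ∧ ((1 : A) ∈ Ideal.span (GSeq x n ∪ {x n}) → (1 : A) = 0)}

/-- The union `G = ⋃ₙ Gₙ`. -/
def GUnion {A : Type*} [CommRing A] (x : ℕ → A) : Set A :=
  ⋃ n, GSeq x n

/-- For a binary sequence `v`, the ideal `a_v = (v₀x₀, …, v_{n-1}x_{n-1}, x_n)`. -/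
def aIdeal {A : Type*} [CommRing A] (x : ℕ → A) (v : ℕ → Bool) (n : ℕ) : Ideal A :=
  Ideal.span (Set.range (fun i : Fin n => (if v i then (1 : A) else 0) * x i) ∪ {x n})

lemma gseq_mono {A : Type*} [CommRing A] (x : ℕ → A) :
    Monotone (GSeq x) := by
  apply monotone_nat_of_le_succ
  intro n
  simp [GSeq]

lemma one_mem_span_gseq {A : Type*} [CommRing A] (x : ℕ → A) (n : ℕ)
    (h : (1 : A) ∈ Ideal.span (GSeq x n)) : (1 : A) = 0 := by
  induction n with
  | zero => simpa [GSeq, Ideal.span_empty] using h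
  | succ n ih =>
    by_cases hc : ((1 : A) ∈ Ideal.span (GSeq x n ∪ {x n}) → (1 : A) = 0)
    · apply hc
      refine Ideal.span_mono ?_ h
      rw [GSeq]
      apply Set.union_subset_union_right
      intro y hy; exact hy.1 ▸ rfl
    · apply ih
      have : {y | y = x n ∧ ((1 : A) ∈ Ideal.span (GSeq x n ∪ {x n}) → (1 : A) = 0)} = (∅ : Set A) := by
        ext y; simp only [Set.mem_setOf_eq, Set.mem_empty_iff_false, iff_false]
        rintro ⟨_, h2⟩; exact hc h2
      rw [GSeq, this, Set.union_empty] at h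
      exact h

lemma span_gseq_eq {A : Type*} [CommRing A] (x : ℕ → A) (n : ℕ) (v : ℕ → Bool)
    (hv : ∀ i < n, (v i = true ↔ ((1 : A) ∈ aIdeal x v i → (1 : A) = 0))) :
    Ideal.span (GSeq x n) =
      Ideal.span (Set.range (fun i : Fin n => (if v i then (1 : A) else 0) * x i)) := by
  induction n with
  | zero =>
    simp [GSeq, Ideal.span_empty]
  | succ n ih =>
    have ih' := ih (fun i hi => hv i (Nat.lt_succ_of_lt hi))
    have hrange : Set.range (fun i : Fin (n+1) => (if v i then (1 : A) else 0) * x i)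
        = Set.range (fun i : Fin n => (if v i then (1 : A) else 0) * x i)
          ∪ {(if v n then (1 : A) else 0) * x n} := by
      ext y
      constructor
      · rintro ⟨i, rfl⟩
        rcases Fin.eq_castSucc_or_eq_last i with ⟨j, rfl⟩ | rfl
        · exact Or.inl ⟨j, rfl⟩
        · exact Or.inr rfl
      · rintro (⟨i, rfl⟩ | h)
        · exact ⟨i.castSucc, rfl⟩
        · exact ⟨Fin.last n, h.symm⟩
    have haId : aIdeal x v n = Ideal.span (GSeq x n ∪ {x n}) := by
      rw [aIdeal, Ideal.span_union, Ideal.span_union, ih']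
    by_cases hb : v n = true
    · have hcond : (1 : A) ∈ Ideal.span (GSeq x n ∪ {x n}) → (1 : A) = 0 := by
        rw [← haId]; exact (hv n (Nat.lt_succ_self n)).1 hb
      have hS : {y | y = x n ∧ ((1 : A) ∈ Ideal.span (GSeq x n ∪ {x n}) → (1 : A) = 0)}
          = ({x n} : Set A) := by
        ext y
        simp only [Set.mem_setOf_eq, Set.mem_singleton_iff]
        exact ⟨fun h => h.1, fun h => ⟨h, hcond⟩⟩
      have hxn : (if v n then (1 : A) else 0) * x n = x n := by simp [hb]
      rw [hxn] at hrange
      rw [GSeq, hS, hrange, Ideal.span_union, Ideal.span_union, ih']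
    · have hb' : v n = false := by simpa using hb
      have hcond : ¬ ((1 : A) ∈ Ideal.span (GSeq x n ∪ {x n}) → (1 : A) = 0) := by
        rw [← haId]
        intro h
        exact hb ((hv n (Nat.lt_succ_self n)).2 h)
      have hS : {y | y = x n ∧ ((1 : A) ∈ Ideal.span (GSeq x n ∪ {x n}) → (1 : A) = 0)}
          = (∅ : Set A) := by
        ext y; simp only [Set.mem_setOf_eq, Set.mem_empty_iff_false, iff_false]
        rintro ⟨_, h2⟩; exact hcond h2
      have hxn : (if v n then (1 : A) else 0) * x n = 0 := by simp [hb']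
      rw [hxn] at hrange
      rw [GSeq, hS, Set.union_empty, hrange,
        Ideal.span_union, ih', Ideal.span_singleton_eq_bot.2 rfl, sup_bot_eq]

/-- If the binary sequence `v` satisfies `vᵢ = 1 ↔ 1 ∉ a_{[v₀,…,v_{i-1}]}` for
all `i < n`, then `a_v = (Gₙ) + (xₙ)`; in particular `xₙ ∈ G ↔ 1 ∉ a_v`. -/
theorem aIdeal_eq_span_GSeq {A : Type*} [CommRing A] (x : ℕ → A)
    (hx : Function.Surjective x) (n : ℕ) (v : ℕ → Bool)
    (hv : ∀ i < n, (v i = true ↔ ((1 : A) ∈ aIdeal x v i → (1 : A) = 0))) :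
    aIdeal x v n = Ideal.span (GSeq x n) ⊔ Ideal.span {x n} ∧
    (x n ∈ GUnion x ↔ ((1 : A) ∈ aIdeal x v n → (1 : A) = 0)) := by
  have heq : aIdeal x v n = Ideal.span (GSeq x n) ⊔ Ideal.span {x n} := by
    rw [aIdeal, Ideal.span_union, span_gseq_eq x n v hv]
  refine ⟨heq, ?_, ?_⟩
  · rintro ⟨S, ⟨m, rfl⟩, hm⟩ h1
    rw [heq, ← Ideal.span_union] at h1
    have hk : GSeq x n ∪ {x n} ⊆ GSeq x (max m n + 1) := by
      apply Set.union_subset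
      · exact gseq_mono x (le_trans (le_max_right m n) (Nat.le_succ _))
      · rintro y rfl
        exact gseq_mono x (le_trans (le_max_left m n) (Nat.le_succ _)) hm
    exact one_mem_span_gseq x _ (Ideal.span_mono hk h1)
  · intro h
    have : x n ∈ GSeq x (n + 1) := by
      rw [GSeq]
      right
      refine ⟨rfl, ?_⟩
      rw [← Ideal.span_union] at heq
      rw [← heq]; exact h
    exact Set.mem_iUnion.2 ⟨n + 1, this⟩
end

section
/- For every n ∈ ℕ: x_n ∈ G if and only if there is no binary sequence v ∈ {0,1}^n with 1 ∈ a_v and v_i = 1 ↔ 1 ∉ a_{[v₀,…,v_{i-1}]} for all i < n. This gives a uniform first-order characterization of membership in the maximal ideal, provable in minimal/intuitionistic logic. -/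
section Aux
variable {A : Type*} [CommRing A] (x : ℕ → A)

lemma GSeq_mono : Monotone (GSeq x) := by
  apply monotone_nat_of_le_succ
  intro n
  show GSeq x n ⊆ GSeq x n ∪ _
  exact Set.subset_union_left

lemma mem_GSeq_iff (y : A) (n : ℕ) :
    y ∈ GSeq x n ↔ ∃ i < n, y = x i ∧
      ((1 : A) ∈ Ideal.span (GSeq x i ∪ {x i}) → (1 : A) = 0) := by
  induction n with
  | zero => simp [GSeq]
  | succ n ih =>
    show y ∈ GSeq x n ∪ _ ↔ _
    simp only [Set.mem_union, ih, Set.mem_setOf_eq]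
    constructor
    · rintro (⟨i, hi, h⟩ | ⟨h1, h2⟩)
      · exact ⟨i, Nat.lt_succ_of_lt hi, h⟩
      · exact ⟨n, Nat.lt_succ_self n, h1, h2⟩
    · rintro ⟨i, hi, h⟩
      rcases Nat.lt_succ_iff_lt_or_eq.mp hi with h' | rfl
      · exact Or.inl ⟨i, h', h⟩
      · exact Or.inr h

lemma one_not_mem_span_GSeq (h1 : (1 : A) ≠ 0) (n : ℕ) :
    (1 : A) ∉ Ideal.span (GSeq x n) := by
  induction n with
  | zero => simp [GSeq, Ideal.span_empty, h1]
  | succ n ih =>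
    by_cases h : (1 : A) ∈ Ideal.span (GSeq x n ∪ {x n})
    · have : GSeq x (n + 1) = GSeq x n := by
        show GSeq x n ∪ _ = GSeq x n
        rw [Set.union_eq_self_of_subset_right]
        rintro y ⟨rfl, hy⟩
        exact absurd (hy h) h1
      rw [this]; exact ih
    · intro hmem
      apply h
      refine Ideal.span_mono ?_ hmem
      show GSeq x n ∪ _ ⊆ _
      apply Set.union_subset Set.subset_union_left
      rintro y ⟨rfl, -⟩
      exact Set.mem_union_right _ rfl

lemma mem_GUnion_iff (h1 : (1 : A) ≠ 0) (n : ℕ) :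
    x n ∈ GUnion x ↔ (1 : A) ∉ Ideal.span (GSeq x n ∪ {x n}) := by
  constructor
  · rintro hmem hone
    obtain ⟨_, ⟨m, rfl⟩, hm⟩ := hmem
    set M := max m (n + 1) with hM
    have hxn : x n ∈ GSeq x M := GSeq_mono x (le_max_left _ _) hm
    have hsub : Ideal.span (GSeq x n ∪ {x n}) ≤ Ideal.span (GSeq x M) := by
      rw [Ideal.span_le]
      apply Set.union_subset
      · intro y hy
        exact Ideal.subset_span
          (GSeq_mono x (le_trans (Nat.le_succ n) (le_max_right m (n + 1))) hy)
      · rintro y rfl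
        exact Ideal.subset_span hxn
    exact one_not_mem_span_GSeq x h1 M (hsub hone)
  · intro hone
    refine Set.mem_iUnion.mpr ⟨n + 1, ?_⟩
    show x n ∈ GSeq x n ∪ _
    exact Set.mem_union_right _ ⟨rfl, fun h => absurd h hone⟩

lemma aIdeal_eq_span (h1 : (1 : A) ≠ 0) :
    ∀ n, ∀ w : ℕ → Bool,
      (∀ i < n, (w i = true ↔ ((1 : A) ∈ aIdeal x w i → (1 : A) = 0))) →
      aIdeal x w n = Ideal.span (GSeq x n ∪ {x n}) := by
  intro n
  induction n using Nat.strong_induction_on with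
  | _ n ih =>
  intro w hw
  have key : ∀ i < n, (w i = true ↔
      ((1 : A) ∈ Ideal.span (GSeq x i ∪ {x i}) → (1 : A) = 0)) := by
    intro i hi
    rw [hw i hi, ih i hi w (fun j hj => hw j (hj.trans hi))]
  apply le_antisymm
  · rw [aIdeal, Ideal.span_le]
    apply Set.union_subset
    · rintro y ⟨i, rfl⟩
      dsimp only
      by_cases hv : w i = true
      · rw [hv, if_pos rfl, one_mul]
        apply Ideal.subset_span
        apply Set.mem_union_left
        apply GSeq_mono x i.2
        rw [mem_GSeq_iff]
        exact ⟨i, Nat.lt_succ_self _, rfl, (key i i.2).mp hv⟩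
      · rw [if_neg hv, zero_mul]
        exact (Ideal.span _).zero_mem
    · rintro y rfl
      exact Ideal.subset_span (Set.mem_union_right _ rfl)
  · rw [Ideal.span_le]
    apply Set.union_subset
    · intro y hy
      rw [mem_GSeq_iff] at hy
      obtain ⟨i, hi, rfl, hcond⟩ := hy
      have : w i = true := (key i hi).mpr hcond
      apply Ideal.subset_span
      apply Set.mem_union_left
      exact ⟨⟨i, hi⟩, by dsimp only; rw [this, if_pos rfl, one_mul]⟩
    · rintro y rfl
      exact Ideal.subset_span (Set.mem_union_right _ rfl)

open Classical in
noncomputable def canonV (x : ℕ → A) : ℕ → Bool :=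
  fun i => if (1 : A) ∈ Ideal.span (GSeq x i ∪ {x i}) then false else true

lemma canonV_spec (h1 : (1 : A) ≠ 0) :
    ∀ i, (canonV x i = true ↔ ((1 : A) ∈ aIdeal x (canonV x) i → (1 : A) = 0)) := by
  intro i
  induction i using Nat.strong_induction_on with
  | _ i ih =>
  rw [aIdeal_eq_span x h1 i (canonV x) ih]
  by_cases h : (1 : A) ∈ Ideal.span (GSeq x i ∪ {x i})
  · rw [show canonV x i = false from by simp only [canonV, if_pos h]]
    simp only [Bool.false_eq_true, false_iff]
    intro hh; exact absurd (hh h) h1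
  · rw [show canonV x i = true from by simp only [canonV, if_neg h]]
    simp only [true_iff]
    intro hh; exact absurd hh h

end Aux

/-- Uniform first-order characterization: `xₙ ∈ G` iff there is no binary
sequence `v ∈ {0,1}ⁿ` with `1 ∈ a_v` and `vᵢ = 1 ↔ 1 ∉ a_{[v₀,…,v_{i-1}]}`
for all `i < n`, where `¬φ` means `φ → 1 = 0`. -/
theorem mem_G_iff_no_witness {A : Type*} [CommRing A] (x : ℕ → A)
    (hx : Function.Surjective x) (n : ℕ) :
    x n ∈ GUnion x ↔
      ((∃ v : ℕ → Bool, (1 : A) ∈ aIdeal x v n ∧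
        ∀ i < n, (v i = true ↔ ((1 : A) ∈ aIdeal x v i → (1 : A) = 0))) →
        (1 : A) = 0) := by
  by_cases h1 : (1 : A) = 0
  · constructor
    · intro _ _; exact h1
    · intro _
      refine Set.mem_iUnion.mpr ⟨n + 1, ?_⟩
      show x n ∈ GSeq x n ∪ _
      exact Set.mem_union_right _ ⟨rfl, fun _ => h1⟩
  · rw [mem_GUnion_iff x h1 n]
    constructor
    · rintro hone ⟨w, hw1, hw2⟩
      rw [aIdeal_eq_span x h1 n w hw2] at hw1
      exact absurd hw1 hone
    · intro h hone
      apply h1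
      apply h
      refine ⟨canonV x, ?_, fun i _ => canonV_spec x h1 i⟩
      rw [aIdeal_eq_span x h1 n (canonV x) (fun i _ => canonV_spec x h1 i)]
      exact hone
end

section
/- Let A be a countable commutative ring and x ∈ A an element which is not nilpotent. Then there is a radical, double-negation stable prime ideal p ⊆ A with x ∉ p. -/
/-- Krull's lemma, constructively: if `x` is not nilpotent in a countable
commutative ring `A`, there is a radical, double-negation stable prime ideal
`p` with `x ∉ p`. Negation `¬φ` means `φ → 1 = 0`. -/
theorem exists_prime_not_mem_of_not_nilpotent {A : Type*} [CommRing A] [Countable A]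
    (x : A) (hx : IsNilpotent x → (1 : A) = 0) :
    ∃ p : Ideal A,
      ((1 : A) ∈ p → (1 : A) = 0) ∧
      (∀ a b : A, a * b ∈ p → (a ∈ p → (1 : A) = 0) → b ∈ p) ∧
      (∀ (a : A) (k : ℕ), a ^ k ∈ p → a ∈ p) ∧
      (∀ a : A, ((a ∈ p → (1 : A) = 0) → (1 : A) = 0) → a ∈ p) ∧
      (x ∈ p → (1 : A) = 0) := by
  by_cases h10 : (1 : A) = 0
  · exact ⟨⊤, fun _ => h10, fun a b _ _ => trivial, fun a k _ => trivial,
      fun a _ => trivial, fun _ => h10⟩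
  · have hxn : x ∉ nilradical A := fun h => h10 (hx (mem_nilradical.mp h))
    rw [nilradical_eq_sInf, Ideal.mem_sInf] at hxn
    push_neg at hxn
    obtain ⟨p, hp, hxp⟩ := hxn
    haveI : p.IsPrime := hp
    refine ⟨p, fun h => absurd ((Ideal.eq_top_iff_one p).mpr h) hp.ne_top,
      fun a b hab ha => ?_, fun a k hak => ?_, fun a ha => ?_, fun h => absurd h hxp⟩
    · rcases hp.mem_or_mem hab with h | h
      · exact absurd (ha h) h10
      · exact h
    · by_contra hna
      rcases k with _ | k
      · exact absurd ((Ideal.eq_top_iff_one p).mpr (by simpa using hak)) hp.ne_top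
      · exact hna (hp.mem_of_pow_mem _ hak)
    · by_contra hna
      exact h10 (ha (fun h => absurd h hna))
end

section
/- Let A be a countable commutative ring and x ∈ A such that x is apart from the Jacobson radical, i.e., there exists y ∈ A with 1 − xy not invertible. Then there is a maximal ideal m of A (proper, and 1 ∉ m + (z) implies z ∈ m for all z, with negation relative to the ideal (1 − xy)) such that x ∉ m. -/
/-- If `x` is apart from the Jacobson radical (there is `y` with `1 - xy` not
invertible), then there is a maximal ideal `m` (proper and maximal with
negation relative to the ideal `(1 - xy)`) with `x ∉ m`. -/
theorem exists_maximal_not_mem_of_apart_jacobson {A : Type*} [CommRing A] [Countable A]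
    (x y : A) (hy : IsUnit (1 - x * y) → (1 : A) = 0) :
    ∃ m : Ideal A,
      ((1 : A) ∈ m → (1 : A) ∈ Ideal.span ({1 - x * y} : Set A)) ∧
      (∀ z : A, ((1 : A) ∈ m ⊔ Ideal.span {z} → (1 : A) ∈ Ideal.span ({1 - x * y} : Set A)) →
        z ∈ m) ∧
      (x ∈ m → (1 : A) = 0) := by
  by_cases h1 : (1 : A) ∈ Ideal.span ({1 - x * y} : Set A)
  · -- then 1 - x*y is a unit, so 1 = 0
    obtain ⟨c, hc⟩ := Ideal.mem_span_singleton'.mp h1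
    have hz : (1 : A) = 0 := hy ⟨⟨1 - x * y, c, by rw [mul_comm]; exact hc, hc⟩, rfl⟩
    exact ⟨⊤, fun _ => h1, fun z _ => trivial, fun _ => hz⟩
  · have hne : Ideal.span ({1 - x * y} : Set A) ≠ ⊤ := by
      intro h; exact h1 (h ▸ Submodule.mem_top)
    obtain ⟨m, hm, hle⟩ := Ideal.exists_le_maximal _ hne
    refine ⟨m, fun h => absurd (m.eq_top_iff_one.mpr h) hm.ne_top, fun z hz => ?_, fun hx => ?_⟩
    · by_contra hzm
      have htop : m ⊔ Ideal.span {z} = ⊤ :=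
        hm.1.2 _ (lt_of_le_of_ne le_sup_left (fun h => hzm
          (h ▸ (le_sup_right : Ideal.span {z} ≤ m ⊔ Ideal.span {z})
            (Ideal.mem_span_singleton_self z))))
      exact h1 (hz (htop ▸ Submodule.mem_top))
    · have h1m : 1 - x * y ∈ m := hle (Ideal.mem_span_singleton_self _)
      have hxy : x * y ∈ m := Ideal.mul_mem_right y m hx
      have h1' : (1 : A) ∈ m := by
        have := m.add_mem h1m hxy; simpa using this
      exact absurd (m.eq_top_iff_one.mpr h1') hm.ne_top
end
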